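/- The collapse S* = ⟨W*, R_Q*, R_M*, ρ*⟩ of a quantum modal structure S with respect to an admissible set Σ is itself a quantum modal structure: W* is nonempty, R_Q* is reflexive and symmetric, R_M* is forced by R_Q*, and ρ*(p) is an R_Q*-closed subset of W* for every atomic formula p. -/
import Mathlib


/-- Formulas of quantum modal logic: atoms, conjunction, negation, box. -/
inductive Formula : Type
  | atom : ℕ → Formula
  | and  : Formula → Formula → Formula
  | neg  : Formula → Formula
  | box  : Formula → Formula
deriving DecidableEq

/-- A set `X ⊆ W` is `R_Q`-closed. -/
def RQClosed {W : Type} (RQ : W → W → Prop) (X : Set W) : Prop :=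
  ∀ i : W, i ∈ X ↔ ∀ j : W, RQ i j → ∃ k : W, RQ j k ∧ k ∈ X

/-- A quantum modal structure `⟨W, R_Q, R_M, ρ⟩`. -/
structure QMS where
  W : Type
  nonempty : Nonempty W
  RQ : W → W → Prop
  RM : W → W → Prop
  val : ℕ → Set W
  RQ_refl : ∀ i, RQ i i
  RQ_symm : ∀ i j, RQ i j → RQ j i
  RM_forced : ∀ i l, RM i l → ∀ j, RQ i j → RM j l
  val_closed : ∀ p, RQClosed RQ (val p)

/-- Truth of a formula at a world, relative to relations `RQ`, `RM` and valuation `v`. -/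
def TruthOn {W : Type} (RQ RM : W → W → Prop) (v : ℕ → Set W) : W → Formula → Prop
  | i, .atom p  => i ∈ v p
  | i, .and α β => TruthOn RQ RM v i α ∧ TruthOn RQ RM v i β
  | i, .neg α   => ∀ j, RQ i j → ¬ TruthOn RQ RM v j α
  | i, .box α   => ∀ l, RM i l → TruthOn RQ RM v l α

/-- Truth at a world of a quantum modal structure. -/
def Truth (S : QMS) : S.W → Formula → Prop := TruthOn S.RQ S.RM S.val

/-- A set of formulas is admissible: closed under subformulas and containing `¬p`
whenever it contains an atomic formula `p`. -/
def Admissible (Sg : Set Formula) : Prop :=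
  (∀ α β, Formula.and α β ∈ Sg → α ∈ Sg ∧ β ∈ Sg) ∧
  (∀ α, Formula.neg α ∈ Sg → α ∈ Sg) ∧
  (∀ α, Formula.box α ∈ Sg → α ∈ Sg) ∧
  (∀ p, Formula.atom p ∈ Sg → Formula.neg (Formula.atom p) ∈ Sg)

/-- `i ∼ j` : worlds `i` and `j` satisfy the same formulas of `Sg`. -/
def Sim (S : QMS) (Sg : Set Formula) (i j : S.W) : Prop :=
  ∀ α ∈ Sg, (Truth S i α ↔ Truth S j α)

/-- The setoid on worlds induced by an admissible set. -/
def worldSetoid (S : QMS) (Sg : Set Formula) : Setoid S.W where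
  r := Sim S Sg
  iseqv := ⟨fun _ _ _ => Iff.rfl,
            fun h α hα => (h α hα).symm,
            fun h1 h2 α hα => (h1 α hα).trans (h2 α hα)⟩

/-- The set of worlds `W* = W/∼` of the collapse. -/
def CW (S : QMS) (Sg : Set Formula) : Type := Quotient (worldSetoid S Sg)

/-- The equivalence class `[i]` of a world `i`. -/
def cls (S : QMS) (Sg : Set Formula) (i : S.W) : CW S Sg :=
  Quotient.mk (worldSetoid S Sg) i

/-- `R_Q*([i],[j])` iff there exist `i' ∼ i` and `j' ∼ j` with `R_Q(i',j')`. -/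
def CRQ (S : QMS) (Sg : Set Formula) (x y : CW S Sg) : Prop :=
  ∃ i j : S.W, cls S Sg i = x ∧ cls S Sg j = y ∧ S.RQ i j

/-- `R_M*([i],[l])` iff for every `□α ∈ Σ`, `i ⊨ □α` implies `l ⊨ α`. -/
def CRM (S : QMS) (Sg : Set Formula) (x y : CW S Sg) : Prop :=
  ∃ i l : S.W, cls S Sg i = x ∧ cls S Sg l = y ∧
    ∀ α, Formula.box α ∈ Sg → Truth S i (Formula.box α) → Truth S l α

/-- `ρ*(p) = {[i] : i ∈ ρ(p)}` if `p ∈ Σ`, and `ρ*(p) = ∅` otherwise. -/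
def CVal (S : QMS) (Sg : Set Formula) (p : ℕ) : Set (CW S Sg) :=
  {x | Formula.atom p ∈ Sg ∧ ∃ i : S.W, cls S Sg i = x ∧ i ∈ S.val p}

/-- Truth at a world of the collapse `S*`, defined by the same truth clauses
using `R_Q*`, `R_M*`, `ρ*`. -/
def CTruth (S : QMS) (Sg : Set Formula) : CW S Sg → Formula → Prop :=
  TruthOn (CRQ S Sg) (CRM S Sg) (CVal S Sg)

/-- Derivability of sequents `Γ ⊢ Δ` in the sequent calculus of QML. -/
inductive Deriv : Set Formula → Set Formula → Prop
  | ax (α : Formula) : Deriv {α} {α}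
  | mem (Γ : Set Formula) (α : Formula) :
      Deriv Γ {Formula.box α, Formula.neg (Formula.box α)}
  | wkn (Γ Δ P Q : Set Formula) : Deriv Γ Δ → Deriv (P ∪ Γ) (Δ ∪ Q)
  | cut (Γ₁ Γ₂ Δ₁ Δ₂ : Set Formula) (α : Formula) :
      Deriv Γ₁ (insert α Δ₁) → Deriv (insert α Γ₂) Δ₂ → Deriv (Γ₁ ∪ Γ₂) (Δ₁ ∪ Δ₂)
  | andl1 (α β : Formula) (Γ Δ : Set Formula) :
      Deriv (insert α Γ) Δ → Deriv (insert (Formula.and α β) Γ) Δ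
  | andl2 (α β : Formula) (Γ Δ : Set Formula) :
      Deriv (insert β Γ) Δ → Deriv (insert (Formula.and α β) Γ) Δ
  | andr (α β : Formula) (Γ Δ : Set Formula) :
      Deriv Γ (insert α Δ) → Deriv Γ (insert β Δ) → Deriv Γ (insert (Formula.and α β) Δ)
  | negl (α : Formula) (Γ Δ : Set Formula) :
      Deriv Γ (insert α Δ) → Deriv (insert (Formula.neg α) Γ) Δ
  | negr (α : Formula) (Δ : Set Formula) :
      Deriv {α} Δ → Deriv (Formula.neg '' Δ) {Formula.neg α}
  | negnegl (α : Formula) (Γ Δ : Set Formula) :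
      Deriv (insert α Γ) Δ → Deriv (insert (Formula.neg (Formula.neg α)) Γ) Δ
  | negnegr (α : Formula) (Γ Δ : Set Formula) :
      Deriv Γ (insert α Δ) → Deriv Γ (insert (Formula.neg (Formula.neg α)) Δ)
  | k (α : Formula) (Γ : Set Formula) :
      Deriv Γ {α} → Deriv (Formula.box '' Γ) {Formula.box α}

/-- The collapse `S*` of a quantum modal structure with respect to an
admissible set is itself a quantum modal structure. -/
theorem collapse_is_QMS (S : QMS) (Sg : Set Formula) (hadm : Admissible Sg) :
    Nonempty (CW S Sg) ∧
    (∀ x, CRQ S Sg x x) ∧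
    (∀ x y, CRQ S Sg x y → CRQ S Sg y x) ∧
    (∀ x z, CRM S Sg x z → ∀ y, CRQ S Sg x y → CRM S Sg y z) ∧
    (∀ p : ℕ, RQClosed (CRQ S Sg) (CVal S Sg p)) := by
  obtain ⟨hand, hneg, hbox, hatomneg⟩ := hadm
  have exrep : ∀ x : CW S Sg, ∃ i : S.W, cls S Sg i = x := fun x => Quotient.exists_rep x
  refine ⟨?_, ?_, ?_, ?_, ?_⟩
  · exact ⟨cls S Sg (Classical.choice S.nonempty)⟩
  · intro x
    obtain ⟨i, rfl⟩ := exrep x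
    exact ⟨i, i, rfl, rfl, S.RQ_refl i⟩
  · rintro x y ⟨i, j, rfl, rfl, h⟩
    exact ⟨j, i, rfl, rfl, S.RQ_symm _ _ h⟩
  · rintro x z ⟨i, l, rfl, rfl, him⟩ y ⟨i', j, hi', rfl, hq⟩
    refine ⟨j, l, rfl, rfl, ?_⟩
    intro α hα hj
    apply him α hα
    have hsim : Sim S Sg i' i := Quotient.exact hi'
    have hi'box : Truth S i' (Formula.box α) := by
      intro m hm
      exact hj m (S.RM_forced i' m hm j hq)
    exact (hsim _ hα).mp hi'box
  · intro p
    by_cases hp : Formula.atom p ∈ Sg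
    · have memiff : ∀ i' : S.W, cls S Sg i' ∈ CVal S Sg p ↔ i' ∈ S.val p := by
        intro i'
        constructor
        · rintro ⟨-, i'', h, hv⟩
          have hsim : Sim S Sg i'' i' := Quotient.exact h
          exact (hsim _ hp).mp hv
        · intro hv; exact ⟨hp, i', rfl, hv⟩
      intro x
      obtain ⟨i, rfl⟩ := exrep x
      rw [memiff]
      constructor
      · intro hv y hy
        obtain ⟨i', j, hi', rfl, hq⟩ := hy
        have hsim : Sim S Sg i' i := Quotient.exact hi'
        have hi'v : i' ∈ S.val p := (hsim _ hp).mpr hv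
        obtain ⟨k, hk, hkv⟩ := (S.val_closed p i').mp hi'v j hq
        exact ⟨cls S Sg k, ⟨j, k, rfl, rfl, hk⟩, (memiff k).mpr hkv⟩
      · intro h
        rw [S.val_closed p i]
        intro j hq
        obtain ⟨z, hz, hzv⟩ := h (cls S Sg j) ⟨i, j, rfl, rfl, hq⟩
        obtain ⟨j', k', hj', rfl, hq'⟩ := hz
        have hk'v : k' ∈ S.val p := (memiff k').mp hzv
        have hsim : Sim S Sg j' j := Quotient.exact hj'
        have hnp : ¬ Truth S j' (Formula.neg (Formula.atom p)) := fun h => h k' hq' hk'v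
        have hnp2 : ¬ Truth S j (Formula.neg (Formula.atom p)) :=
          fun h => hnp ((hsim _ (hatomneg p hp)).mpr h)
        simp only [Truth, TruthOn, not_forall] at hnp2
        obtain ⟨k, hk, hkv⟩ := hnp2
        exact ⟨k, hk, not_not.mp hkv⟩
    · intro x
      constructor
      · rintro ⟨hp', -⟩; exact absurd hp' hp
      · intro h
        obtain ⟨i, rfl⟩ := exrep x
        obtain ⟨z, -, ⟨hp', -⟩⟩ := h (cls S Sg i) ⟨i, i, rfl, rfl, S.RQ_refl i⟩
        exact absurd hp' hp
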